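/- Both (S_1, S_finish, [0,1], (1, ∞))↓ and (S_1, S_start, [0,1], [1, ∞))↓ hold: from every configuration in which robot r is in state S_1 with observed distance at most 1 and robot s is in state S_finish with observed distance greater than 1, and from every configuration in which robot r is in state S_1 with observed distance at most 1 and robot s is in state S_start with observed distance at least 1, every fair SSynch execution of Algorithm 1 solves rendezvous. -/

import Mathlib

/-- Points in the plane. -/
abbrev Pt := EuclideanSpace ℝ (Fin 2)

/-- Observed directions. -/
inductive Dir | left | right
deriving DecidableEq

/-- The six internal states of Algorithm 1. -/
inductive St | start | s1 | s2 (d : Dir) | s3 | finish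
deriving DecidableEq

/-- A local coordinate frame: an orthogonal linear map of the plane. -/
abbrev Frame := Pt ≃ₗᵢ[ℝ] Pt

/-- Observed direction of a local vector `v`: `right` if its first coordinate is
positive, or is zero with positive second coordinate; `left` otherwise. -/
noncomputable def obsDir (v : Pt) : Dir :=
  if 0 < v 0 ∨ (v 0 = 0 ∧ 0 < v 1) then Dir.right else Dir.left

/-- Local vector observed by a robot with unit distance `u` and frame `A`,
located at `p`, looking at the other robot at `q`. -/
noncomputable def obsVec (u : ℝ) (A : Frame) (p q : Pt) : Pt := u⁻¹ • (A (q - p))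

/-- Observed distance. -/
noncomputable def obsDist (u : ℝ) (p q : Pt) : ℝ := ‖q - p‖ / u

/-- Algorithm 1: given the current state, the observed distance `d` and the
observed direction `dir`, returns the new state and the coefficient `μ` such
that the (global) destination is `p + μ • (q - p)` (i.e. local destination `μ • v`). -/
noncomputable def algo1 (s : St) (d : ℝ) (dir : Dir) : St × ℝ :=
  if d = 0 then (s, 0)
  else match s with
  | .start => if d < 1 then (.s1, 1 - 1/d) else (.s2 dir, 1)
  | .s1 => if d ≤ 1 then (.finish, 0) else (.s2 dir, 1)
  | .s2 d' =>
      if dir = d' then (.finish, 1)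
      else if d < 1/2 then (.finish, 0)
      else if d < 1 then (.s3, 1/2)
      else (.s2 d', 1/2)
  | .s3 => if d < 1/4 then (.finish, 0) else (.finish, 1)
  | .finish => if d ≤ 1 then (.finish, 0) else (.finish, 1)

/-- A configuration: positions and internal states of the two robots
(robot `r` is `false`, robot `s` is `true`). -/
structure Config where
  pos : Bool → Pt
  st : Bool → St

/-- Result (new position, new state) of one activation of robot `i`. -/
noncomputable def stepRobot (u : Bool → ℝ) (A : Bool → Frame) (c : Config) (i : Bool) :
    Pt × St :=
  let p := c.pos i
  let q := c.pos (!i)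
  let d := obsDist (u i) p q
  let dir := obsDir (obsVec (u i) (A i) p q)
  let r := algo1 (c.st i) d dir
  (p + r.2 • (q - p), r.1)

/-- One synchronous round in which exactly the robots `i` with `act i = true`
are activated; both activated robots observe the same (pre-round) configuration,
and rigidly reach their computed destinations. -/
noncomputable def stepConfig (u : Bool → ℝ) (A : Bool → Frame) (act : Bool → Bool)
    (c : Config) : Config where
  pos i := if act i then (stepRobot u A c i).1 else c.pos i
  st i := if act i then (stepRobot u A c i).2 else c.st i

/-- The configuration after `n` rounds of the SSynch execution of Algorithm 1
under schedule `sched`, starting from `c0`. -/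
noncomputable def run (u : Bool → ℝ) (A : Bool → Frame) (sched : ℕ → Bool → Bool)
    (c0 : Config) : ℕ → Config
  | 0 => c0
  | n + 1 => stepConfig u A (sched n) (run u A sched c0 n)

/-- A legal fair SSynch schedule: at every round a nonempty set of robots is
activated, and each robot is activated infinitely often. -/
def FairSched (sched : ℕ → Bool → Bool) : Prop :=
  (∀ n, sched n false = true ∨ sched n true = true) ∧
  (∀ i n, ∃ m, n ≤ m ∧ sched m i = true)

/-- Rendezvous is solved: from some round on, the two robots occupy the same
point and never move again. -/
noncomputable def Solves (u : Bool → ℝ) (A : Bool → Frame) (sched : ℕ → Bool → Bool)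
    (c0 : Config) : Prop :=
  ∃ N : ℕ, ∀ n, N ≤ n → ∀ i, (run u A sched c0 n).pos i = (run u A sched c0 N).pos false

/-- Conditions on a robot: one of the six internal states, or `S₂⁼` / `S₂≠`. -/
inductive Cond | start | s1 | s2 (d : Dir) | s2eq | s2ne | s3 | finish

/-- A robot in state `s` whose currently observed direction is `dir`
satisfies the condition. -/
def Cond.sat : Cond → St → Dir → Prop
  | .start, s, _ => s = .start
  | .s1, s, _ => s = .s1
  | .s2 d', s, _ => s = .s2 d'
  | .s2eq, s, dir => s = .s2 dir
  | .s2ne, s, dir => ∃ d', s = St.s2 d' ∧ d' ≠ dir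
  | .s3, s, _ => s = .s3
  | .finish, s, _ => s = .finish

/-- `(S_a, S_b, I_a, I_b)↓` : for every choice of the units and frames, from
every configuration in which robot `r` satisfies condition `Ca` with observed
distance in `Ia` and robot `s` satisfies condition `Cb` with observed distance
in `Ib`, every fair SSynch execution of Algorithm 1 solves Rendezvous. -/
noncomputable def Down (Ca Cb : Cond) (Ia Ib : Set ℝ) : Prop :=
  ∀ (u : Bool → ℝ) (A : Bool → Frame), (∀ i, 0 < u i) →
    ∀ c0 : Config,
      Ca.sat (c0.st false)
        (obsDir (obsVec (u false) (A false) (c0.pos false) (c0.pos true))) →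
      obsDist (u false) (c0.pos false) (c0.pos true) ∈ Ia →
      Cb.sat (c0.st true)
        (obsDir (obsVec (u true) (A true) (c0.pos true) (c0.pos false))) →
      obsDist (u true) (c0.pos true) (c0.pos false) ∈ Ib →
      ∀ sched : ℕ → Bool → Bool, FairSched sched → Solves u A sched c0

/-!
Robot `r`, in `S_1` or `S_finish` at observed distance at most `1`, never moves when activated
and just switches to `S_finish`. So nothing moves until `s` is first activated; `s` then sees `r`
at distance `≥ 1` (`> 1` in `S_finish`) and moves exactly onto `r`. Once the robots coincide,
every destination `p + μ • (q - p)` is `p`, so nobody moves again.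
-/

lemma algo1_eq_finish_of_le_one {s : St} {d : ℝ} (dir : Dir) (hs : s = .s1 ∨ s = .finish)
    (hd₀ : 0 < d) (hd₁ : d ≤ 1) : algo1 s d dir = (.finish, 0) := by
  rcases hs with rfl | rfl <;> simp [algo1, hd₀.ne', hd₁]

lemma algo1_snd_eq_one {s : St} {d : ℝ} (dir : Dir)
    (hs : (s = .finish ∧ 1 < d) ∨ (s = .start ∧ 1 ≤ d)) : (algo1 s d dir).2 = 1 := by
  rcases hs with ⟨rfl, hd⟩ | ⟨rfl, hd⟩
  · simp [algo1, (zero_lt_one.trans hd).ne', not_le.mpr hd]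
  · simp [algo1, (zero_lt_one.trans_le hd).ne', not_lt.mpr hd]

lemma obsDist_self (u : ℝ) (p : Pt) : obsDist u p p = 0 := by
  simp [obsDist]

lemma obsDist_pos {u : ℝ} (hu : 0 < u) {p q : Pt} (hpq : p ≠ q) : 0 < obsDist u p q :=
  div_pos (norm_pos_iff.mpr (sub_ne_zero.mpr hpq.symm)) hu

section Step

variable (u : Bool → ℝ) (A : Bool → Frame)

lemma stepRobot_fst (c : Config) (i : Bool) :
    (stepRobot u A c i).1 = c.pos i +
      (algo1 (c.st i) (obsDist (u i) (c.pos i) (c.pos (!i)))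
        (obsDir (obsVec (u i) (A i) (c.pos i) (c.pos (!i))))).2 • (c.pos (!i) - c.pos i) :=
  rfl

lemma stepRobot_eq_finish_of_le_one {c : Config} {i : Bool}
    (hs : c.st i = .s1 ∨ c.st i = .finish)
    (hd₀ : 0 < obsDist (u i) (c.pos i) (c.pos (!i)))
    (hd₁ : obsDist (u i) (c.pos i) (c.pos (!i)) ≤ 1) :
    stepRobot u A c i = (c.pos i, .finish) := by
  simp [stepRobot, algo1_eq_finish_of_le_one _ hs hd₀ hd₁]

lemma stepRobot_fst_eq_of_moving {c : Config} {i : Bool}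
    (hs : (c.st i = .finish ∧ 1 < obsDist (u i) (c.pos i) (c.pos (!i))) ∨
      (c.st i = .start ∧ 1 ≤ obsDist (u i) (c.pos i) (c.pos (!i)))) :
    (stepRobot u A c i).1 = c.pos (!i) := by
  rw [stepRobot_fst, algo1_snd_eq_one _ hs, one_smul, add_sub_cancel]

lemma stepRobot_fst_of_pos_eq {c : Config} (hc : c.pos false = c.pos true) (i : Bool) :
    (stepRobot u A c i).1 = c.pos i := by
  have : c.pos (!i) = c.pos i := by cases i <;> simp [hc]
  rw [stepRobot_fst, this, sub_self, smul_zero, add_zero]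

lemma stepConfig_pos_of_forall_eq {c : Config} {x : Pt} (hc : ∀ i, c.pos i = x)
    (act : Bool → Bool) (i : Bool) : (stepConfig u A act c).pos i = x := by
  rw [← hc i]
  by_cases h : act i
  · simp only [stepConfig, h, if_true]
    exact stepRobot_fst_of_pos_eq u A ((hc false).trans (hc true).symm) i
  · simp [stepConfig, h]

variable (sched : ℕ → Bool → Bool) (c0 : Config)

lemma run_pos_of_forall_eq {N : ℕ} {x : Pt} (hN : ∀ i, (run u A sched c0 N).pos i = x)
    {n : ℕ} (hn : N ≤ n) (i : Bool) : (run u A sched c0 n).pos i = x := by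
  induction n, hn using Nat.le_induction generalizing i with
  | base => exact hN i
  | succ n _ ih => exact stepConfig_pos_of_forall_eq u A ih _ i

lemma solves_of_forall_pos_eq {N : ℕ} {x : Pt} (hN : ∀ i, (run u A sched c0 N).pos i = x) :
    Solves u A sched c0 :=
  ⟨N, fun _ hn i => (run_pos_of_forall_eq u A sched c0 hN hn i).trans (hN false).symm⟩

lemma run_of_forall_lt_not_activated
    (hr : c0.st false = .s1 ∨ c0.st false = .finish)
    (hd₀ : 0 < obsDist (u false) (c0.pos false) (c0.pos true))
    (hd₁ : obsDist (u false) (c0.pos false) (c0.pos true) ≤ 1)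
    {n : ℕ} (hn : ∀ m < n, sched m true = false) :
    (run u A sched c0 n).pos = c0.pos ∧
      ((run u A sched c0 n).st false = .s1 ∨ (run u A sched c0 n).st false = .finish) ∧
      (run u A sched c0 n).st true = c0.st true := by
  induction n with
  | zero => exact ⟨rfl, hr, rfl⟩
  | succ n ih =>
    obtain ⟨hpos, hst, hst'⟩ := ih fun m hm => hn m (Nat.lt_succ_of_lt hm)
    have hs : sched n true = false := hn n (Nat.lt_succ_self n)
    have hrobot := stepRobot_eq_finish_of_le_one u A (i := false) hst
      (by simpa [hpos] using hd₀) (by simpa [hpos] using hd₁)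
    refine ⟨funext fun i => ?_, ?_, ?_⟩
    · cases i <;> cases h : sched n false <;> simp [run, stepConfig, hs, h, hrobot, hpos]
    · cases h : sched n false <;> simp [run, stepConfig, h, hrobot, hst]
    · simp [run, stepConfig, hs, hst']

end Step

theorem solves_of_near_of_moving (u : Bool → ℝ) (A : Bool → Frame) (hu : 0 < u false)
    (c0 : Config) (hr : c0.st false = .s1 ∨ c0.st false = .finish)
    (hdr : obsDist (u false) (c0.pos false) (c0.pos true) ≤ 1)
    (hs : (c0.st true = .finish ∧ 1 < obsDist (u true) (c0.pos true) (c0.pos false)) ∨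
      (c0.st true = .start ∧ 1 ≤ obsDist (u true) (c0.pos true) (c0.pos false)))
    (sched : ℕ → Bool → Bool) (hfair : FairSched sched) :
    Solves u A sched c0 := by
  have hpq : c0.pos false ≠ c0.pos true := by
    rintro h
    rcases hs with ⟨-, hd⟩ | ⟨-, hd⟩ <;> rw [h, obsDist_self] at hd <;> linarith
  have hex : ∃ m, sched m true = true := (hfair.2 true 0).imp fun _ => And.right
  set N := Nat.find hex
  obtain ⟨hpos, hst, hst'⟩ := run_of_forall_lt_not_activated u A sched c0 hr
    (obsDist_pos hu hpq) hdr (n := N) fun m hm => by simpa using Nat.find_min hex hm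
  have hrobot := stepRobot_eq_finish_of_le_one u A (i := false) hst
    (by simpa [hpos] using obsDist_pos hu hpq) (by simpa [hpos] using hdr)
  refine solves_of_forall_pos_eq u A sched c0 (N := N + 1) (x := c0.pos false) fun i => ?_
  cases i
  · cases h : sched N false <;> simp [run, stepConfig, h, hpos, hrobot]
  · have hact : sched N true = true := Nat.find_spec hex
    have hmove := stepRobot_fst_eq_of_moving u A (c := run u A sched c0 N) (i := true)
      (by simpa [hpos, hst'] using hs)
    simpa [run, stepConfig, hact, hpos] using hmove

/-- Lemma 9: `(S_1, S_finish, [0,1], (1, ∞))↓` and `(S_1, S_start, [0,1], [1, ∞))↓`. -/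
theorem lemma_l6 :
    Down Cond.s1 Cond.finish (Set.Icc (0 : ℝ) 1) (Set.Ioi (1 : ℝ)) ∧
    Down Cond.s1 Cond.start (Set.Icc (0 : ℝ) 1) (Set.Ici (1 : ℝ)) :=
  ⟨fun u A hu c0 hr hdr hs hds sched hfair =>
    solves_of_near_of_moving u A (hu false) c0 (Or.inl hr) hdr.2 (Or.inl ⟨hs, hds⟩) sched hfair,
   fun u A hu c0 hr hdr hs hds sched hfair =>
    solves_of_near_of_moving u A (hu false) c0 (Or.inl hr) hdr.2 (Or.inr ⟨hs, hds⟩) sched hfair⟩
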